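/- arXiv:1505.03509 — 3 statements merged into one kernel-verified Lean document; each statement's English description precedes it below -/
import Mathlib

section
/- For every natural number r and every integer vector x ∈ ℤ^{3^{r+1}} with M_r · x = 0, there exists an integer t such that x = t · k_r. -/
/-- Entries of the 2×3 matrix `M₀` with rows (1,0,1) and (0,1,1), as a function on ℕ. -/
def M0nat : ℕ → ℕ → ℤ
  | 0, 0 => 1
  | 0, 1 => 0
  | 0, 2 => 1
  | 1, 0 => 0
  | 1, 1 => 1
  | 1, 2 => 1
  | _, _ => 0

/-- Entries of the matrix `M_r` (with `3^(r+1) - 1` rows and `3^(r+1)` columns):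
`M_0` is as above, and `M_{r+1}` is the vertical stack of `M_r ⊗ (1,1,1)`
(first `3^(r+1) - 1` rows) and `I_{3^(r+1)} ⊗ M_0` (remaining `2·3^(r+1)` rows).
In the Kronecker product, row/column pairs are ordered lexicographically, i.e.
`(A ⊗ B) (p·i + s) (q·j + t) = A i j * B s t` for `B` of size `p × q`. -/
def Mnat : ℕ → ℕ → ℕ → ℤ
  | 0, i, j => M0nat i j
  | r + 1, i, j =>
    if i < 3 ^ (r + 1) - 1 then
      -- block `M_r ⊗ (1,1,1)`
      Mnat r i (j / 3)
    else
      -- block `I_{3^(r+1)} ⊗ M_0`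
      if (i - (3 ^ (r + 1) - 1)) / 2 = j / 3 then
        M0nat ((i - (3 ^ (r + 1) - 1)) % 2) (j % 3)
      else 0

/-- The matrix `M_r`. -/
def Mmat (r : ℕ) : Matrix (Fin (3 ^ (r + 1) - 1)) (Fin (3 ^ (r + 1))) ℤ :=
  Matrix.of fun i j => Mnat r i.val j.val

/-- Components of the vector `k_r` of length `3^(r+1)`:
`k_0 = (1,1,-1)` and `k_{r+1} = (k_r, k_r, -k_r)`. -/
def knat : ℕ → ℕ → ℤ
  | 0, j => if j = 2 then -1 else 1
  | r + 1, j => if j < 2 * 3 ^ (r + 1) then knat r (j % 3 ^ (r + 1)) else -knat r (j % 3 ^ (r + 1))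

/-- The vector `k_r`. -/
def kvec (r : ℕ) : Fin (3 ^ (r + 1)) → ℤ := fun j => knat r j.val

lemma sum_range_three_mul (F : ℕ → ℤ) (n : ℕ) :
    ∑ j ∈ Finset.range (3 * n), F j
      = ∑ b ∈ Finset.range n, (F (3*b) + F (3*b+1) + F (3*b+2)) := by
  induction n with
  | zero => simp
  | succ n ih =>
    have h : 3 * (n+1) = 3*n + 1 + 1 + 1 := by ring
    rw [h, Finset.sum_range_succ, Finset.sum_range_succ, Finset.sum_range_succ,
        Finset.sum_range_succ, ih]
    abel

lemma knat_succ (r j : ℕ) (hj : j < 3 ^ (r + 2)) :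
    knat (r+1) j = knat 0 (j % 3) * knat r (j / 3) := by
  induction r generalizing j with
  | zero =>
    interval_cases j <;> decide
  | succ r ih =>
    have h1 : j % 3 ^ (r+2) < 3 ^ (r+2) := Nat.mod_lt _ (by positivity)
    have e1 := ih (j % 3 ^ (r+2)) h1
    have e2 : (j % 3^(r+2)) % 3 = j % 3 := Nat.mod_mod_of_dvd _ ⟨3^(r+1), by ring⟩
    have e3 : (j % 3^(r+2)) / 3 = (j / 3) % 3 ^ (r+1) := by
      have := Nat.mod_mul_right_div_self j 3 (3^(r+1))
      have h33 : 3 * 3^(r+1) = 3^(r+2) := by ring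
      rw [h33] at this
      exact this
    have hcond : j < 2 * 3 ^ (r+2) ↔ j / 3 < 2 * 3 ^ (r+1) := by
      rw [Nat.div_lt_iff_lt_mul (by norm_num : 0 < 3)]
      have hpow : 3^(r+2) = 3^(r+1)*3 := pow_succ 3 (r+1)
      omega
    show (if j < 2 * 3 ^ (r+2) then knat (r+1) (j % 3^(r+2)) else -knat (r+1) (j % 3^(r+2)))
        = knat 0 (j % 3) * (if j / 3 < 2 * 3^(r+1) then knat r (j/3 % 3^(r+1)) else -knat r (j/3 % 3^(r+1)))
    rw [e1, e2, e3]
    by_cases hc : j < 2 * 3^(r+2)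
    · rw [if_pos hc, if_pos (hcond.mp hc)]
    · rw [if_neg hc, if_neg (fun h => hc (hcond.mpr h))]
      ring

lemma Mnat_lower (r i j : ℕ) (hi : i < 3 ^ (r+1) - 1) :
    Mnat (r+1) i j = Mnat r i (j / 3) := by
  show (if i < 3 ^ (r + 1) - 1 then Mnat r i (j / 3) else _) = _
  rw [if_pos hi]

lemma Mnat_upper (r m j : ℕ) :
    Mnat (r+1) (3 ^ (r+1) - 1 + m) j
      = if m / 2 = j / 3 then M0nat (m % 2) (j % 3) else 0 := by
  show (if 3 ^ (r+1) - 1 + m < 3 ^ (r + 1) - 1 then _ else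
      if (3 ^ (r+1) - 1 + m - (3 ^ (r + 1) - 1)) / 2 = j / 3 then
        M0nat ((3 ^ (r+1) - 1 + m - (3 ^ (r + 1) - 1)) % 2) (j % 3) else 0) = _
  rw [if_neg (by omega), Nat.add_sub_cancel_left]

lemma key (r : ℕ) : ∀ x : ℕ → ℤ,
    (∀ i < 3 ^ (r+1) - 1, ∑ j ∈ Finset.range (3 ^ (r+1)), Mnat r i j * x j = 0) →
    ∃ t : ℤ, ∀ j < 3 ^ (r+1), x j = t * knat r j := by
  induction r with
  | zero =>
    intro x hx
    have h0 := hx 0 (by norm_num)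
    have h1 := hx 1 (by norm_num)
    norm_num [Finset.sum_range_succ, Mnat, M0nat] at h0 h1
    refine ⟨x 0, ?_⟩
    intro j hj
    interval_cases j <;> simp [knat] <;> omega
  | succ r ih =>
    intro x hx
    set n := 3 ^ (r+1) with hn
    have hn1 : 1 ≤ n := Nat.one_le_pow _ _ (by norm_num)
    have h3n : 3 ^ (r+1+1) = 3 * n := by rw [hn]; ring
    have h3n' : (3:ℕ) ^ (r+2) = 3 * n := by rw [hn]; ring
    -- block row constraints
    have hrow : ∀ b < n, ∀ s < 2,
        M0nat s 0 * x (3*b) + M0nat s 1 * x (3*b+1) + M0nat s 2 * x (3*b+2) = 0 := by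
      intro b hb s hs
      have h := hx (n - 1 + (2*b+s)) (by omega)
      rw [h3n, sum_range_three_mul] at h
      have hb2 : (2*b+s)/2 = b := by omega
      have hs2 : (2*b+s)%2 = s := by omega
      have hsum : ∑ b' ∈ Finset.range n,
            (Mnat (r+1) (n-1+(2*b+s)) (3*b') * x (3*b')
             + Mnat (r+1) (n-1+(2*b+s)) (3*b'+1) * x (3*b'+1)
             + Mnat (r+1) (n-1+(2*b+s)) (3*b'+2) * x (3*b'+2))
          = ∑ b' ∈ Finset.range n,
            (if b = b' then M0nat s 0 * x (3*b') + M0nat s 1 * x (3*b'+1)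
              + M0nat s 2 * x (3*b'+2) else 0) := by
        refine Finset.sum_congr rfl fun b' _ => ?_
        rw [hn, Mnat_upper, Mnat_upper, Mnat_upper, hb2, hs2]
        have d0 : (3*b')/3 = b' := by omega
        have d1 : (3*b'+1)/3 = b' := by omega
        have d2 : (3*b'+2)/3 = b' := by omega
        have m0 : (3*b')%3 = 0 := by omega
        have m1 : (3*b'+1)%3 = 1 := by omega
        have m2 : (3*b'+2)%3 = 2 := by omega
        rw [d0, d1, d2, m0, m1, m2]
        by_cases hbe : b = b' <;> simp [hbe]
      rw [hsum, Finset.sum_ite_eq (Finset.range n) b, if_pos (Finset.mem_range.mpr hb)] at h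
      exact h
    -- consequences: structure within each block
    have hx1 : ∀ b < n, x (3*b+1) = x (3*b) := by
      intro b hb
      have h0 := hrow b hb 0 (by norm_num)
      have h1 := hrow b hb 1 (by norm_num)
      norm_num [M0nat] at h0 h1
      omega
    have hx2 : ∀ b < n, x (3*b+2) = -x (3*b) := by
      intro b hb
      have h0 := hrow b hb 0 (by norm_num)
      norm_num [M0nat] at h0
      omega
    -- the quotient vector
    have hih : ∀ i < n - 1, ∑ b ∈ Finset.range n, Mnat r i b * x (3*b) = 0 := by
      intro i hi
      have h := hx i (by omega)
      rw [h3n, sum_range_three_mul] at h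
      rw [← h]
      apply Finset.sum_congr rfl
      intro b hb
      rw [Finset.mem_range] at hb
      rw [Mnat_lower r i _ hi, Mnat_lower r i _ hi, Mnat_lower r i _ hi]
      have d0 : (3*b)/3 = b := by omega
      have d1 : (3*b+1)/3 = b := by omega
      have d2 : (3*b+2)/3 = b := by omega
      rw [d0, d1, d2, hx1 b hb, hx2 b hb]
      ring
    obtain ⟨t, ht⟩ := ih (fun b => x (3*b)) hih
    refine ⟨t, ?_⟩
    intro j hj
    obtain ⟨b, c, hc, rfl⟩ : ∃ b c, c < 3 ∧ j = 3*b + c := ⟨j/3, j%3, by omega, by omega⟩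
    have hb : b < n := by omega
    rw [knat_succ r _ (by omega)]
    have hd : (3*b+c)/3 = b := by omega
    have hm : (3*b+c)%3 = c := by omega
    rw [hd, hm]
    have hyb := ht b hb
    interval_cases c
    · have e : 3*b+0 = 3*b := rfl
      rw [e, hyb]
      simp [knat]
    · rw [hx1 b hb, hyb]
      simp [knat]
    · rw [hx2 b hb, hyb]
      simp [knat]

open Matrix in
/-- For every natural number `r` and every integer vector `x ∈ ℤ^(3^(r+1))` with
`M_r · x = 0`, there exists an integer `t` such that `x = t · k_r`. -/
theorem eq_smul_kvec_of_mulVec_eq_zero (r : ℕ) (x : Fin (3 ^ (r + 1)) → ℤ)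
    (hx : Mmat r *ᵥ x = 0) : ∃ t : ℤ, x = t • kvec r := by
  have hside : ∀ i < 3 ^ (r+1) - 1, ∑ j ∈ Finset.range (3 ^ (r+1)),
      Mnat r i j * (if h : j < 3 ^ (r+1) then x ⟨j, h⟩ else 0) = 0 := by
    intro i hi
    have h0 : (Mmat r *ᵥ x) ⟨i, hi⟩ = 0 := by rw [hx]; rfl
    rw [Matrix.mulVec, dotProduct] at h0
    calc ∑ j ∈ Finset.range (3 ^ (r+1)),
          Mnat r i j * (if h : j < 3 ^ (r+1) then x ⟨j, h⟩ else 0)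
        = ∑ j : Fin (3 ^ (r+1)),
            Mnat r i j.val * (if h : j.val < 3 ^ (r+1) then x ⟨j.val, h⟩ else 0) :=
          (Fin.sum_univ_eq_sum_range _ _).symm
      _ = ∑ j : Fin (3 ^ (r+1)), Mmat r ⟨i, hi⟩ j * x j := by
          refine Finset.sum_congr rfl fun j _ => ?_
          rw [dif_pos j.isLt]
          rfl
      _ = 0 := h0
  obtain ⟨t, ht⟩ := key r (fun j => if h : j < 3 ^ (r+1) then x ⟨j, h⟩ else 0) hside
  refine ⟨t, ?_⟩
  funext j
  have h := ht j.val j.isLt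
  rw [dif_pos j.isLt] at h
  simpa [kvec] using h
end

section
/- For every natural number r and every natural number n with n ≥ (3^{r+1}−1)/2, there exist vectors s, s' ∈ ℕ^{3^{r+1}} (componentwise nonnegative integer vectors) such that s' = s + k_r componentwise, the sum of the components of s equals n, the sum of the components of s' equals n+1, and M_r · s = M_r · s' (as integer vectors). In particular, two configurations of different total size n and n+1 produce the same value of M_r applied to them. -/
lemma knat_succ_def (r j : ℕ) : knat (r+1) j =
    if j < 2 * 3 ^ (r + 1) then knat r (j % 3 ^ (r + 1)) else -knat r (j % 3 ^ (r + 1)) := rfl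

lemma Mnat_succ_def (r i j : ℕ) : Mnat (r+1) i j =
    if i < 3 ^ (r + 1) - 1 then Mnat r i (j / 3)
    else if (i - (3 ^ (r + 1) - 1)) / 2 = j / 3 then
        M0nat ((i - (3 ^ (r + 1) - 1)) % 2) (j % 3)
      else 0 := rfl

lemma knat_pm (r : ℕ) : ∀ j, knat r j = 1 ∨ knat r j = -1 := by
  induction r with
  | zero => intro j; unfold knat; split <;> simp
  | succ r ih =>
    intro j
    rw [knat_succ_def]
    rcases ih (j % 3 ^ (r+1)) with h | h <;> split <;> simp [h]

lemma sum_range_mul (a b : ℕ) (f : ℕ → ℤ) :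
    ∑ j ∈ Finset.range (a * b), f j
      = ∑ q ∈ Finset.range a, ∑ t ∈ Finset.range b, f (q * b + t) := by
  induction a with
  | zero => simp
  | succ a ih =>
    rw [Finset.sum_range_succ, ← ih, Nat.succ_mul, Finset.sum_range_add]

lemma knat_mul (r : ℕ) : ∀ j < 3 ^ (r + 2), knat (r+1) j = knat r (j / 3) * knat 0 (j % 3) := by
  induction r with
  | zero =>
    intro j hj
    norm_num at hj
    interval_cases j <;> decide
  | succ r ih =>
    intro j hj
    have hB : (0:ℕ) < 3 ^ (r+2) := pow_pos (by norm_num) _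
    have h1 : (j % 3 ^ (r+2)) % 3 = j % 3 := Nat.mod_mod_of_dvd _ ⟨3 ^ (r+1), by ring⟩
    have h2 : (j % 3 ^ (r+2)) / 3 = (j / 3) % 3 ^ (r+1) := by
      have := Nat.mod_mul_right_div_self j 3 (3 ^ (r+1))
      have e : 3 * 3 ^ (r+1) = 3 ^ (r+2) := by ring
      rw [e] at this; exact this
    have hcond : j < 2 * 3 ^ (r+2) ↔ j / 3 < 2 * 3 ^ (r+1) := by
      rw [Nat.div_lt_iff_lt_mul (by norm_num : (0:ℕ) < 3)]
      have e : 2 * 3 ^ (r+1) * 3 = 2 * 3 ^ (r+2) := by ring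
      rw [e]
    rw [knat_succ_def (r+1) j, knat_succ_def r (j/3),
      ih _ (Nat.mod_lt _ hB), h1, h2]
    by_cases hc : j < 2 * 3 ^ (r+2)
    · rw [if_pos hc, if_pos (hcond.mp hc)]
    · rw [if_neg hc, if_neg (fun h => hc (hcond.mpr h)), neg_mul]

lemma knat_sum (r : ℕ) : ∑ j ∈ Finset.range (3 ^ (r + 1)), knat r j = 1 := by
  induction r with
  | zero => decide
  | succ r ih =>
    have hB : (0:ℕ) < 3 ^ (r+1) := pow_pos (by norm_num) _
    have h3 : (3:ℕ) ^ (r+2) = 3 * 3 ^ (r+1) := by ring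
    rw [h3, sum_range_mul]
    rw [Finset.sum_range_succ, Finset.sum_range_succ, Finset.sum_range_succ,
      Finset.sum_range_zero]
    have key : ∀ q, ∀ t < 3 ^ (r+1), knat (r+1) (q * 3 ^ (r+1) + t)
        = (if q * 3 ^ (r+1) + t < 2 * 3 ^ (r+1) then 1 else -1) * knat r t := by
      intro q t ht
      rw [knat_succ_def]
      have hm : (q * 3 ^ (r+1) + t) % 3 ^ (r+1) = t := by
        rw [mul_comm, Nat.mul_add_mod, Nat.mod_eq_of_lt ht]
      rw [hm]
      split <;> ring
    have e0 : ∑ t ∈ Finset.range (3 ^ (r+1)), knat (r+1) (0 * 3 ^ (r+1) + t) = 1 := by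
      rw [Finset.sum_congr rfl fun t htm => by
        rw [key 0 t (Finset.mem_range.mp htm),
          if_pos (by have := Finset.mem_range.mp htm; omega), one_mul]]
      exact ih
    have e1 : ∑ t ∈ Finset.range (3 ^ (r+1)), knat (r+1) (1 * 3 ^ (r+1) + t) = 1 := by
      rw [Finset.sum_congr rfl fun t htm => by
        rw [key 1 t (Finset.mem_range.mp htm),
          if_pos (by have := Finset.mem_range.mp htm; omega), one_mul]]
      exact ih
    have e2 : ∑ t ∈ Finset.range (3 ^ (r+1)), knat (r+1) (2 * 3 ^ (r+1) + t) = -1 := by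
      rw [Finset.sum_congr rfl fun t htm => by
        rw [key 2 t (Finset.mem_range.mp htm),
          if_neg (by have := Finset.mem_range.mp htm; omega), neg_one_mul]]
      rw [Finset.sum_neg_distrib, ih]
    rw [e0, e1, e2]; ring

lemma Mk_sum (r : ℕ) : ∀ i < 3 ^ (r + 1) - 1,
    ∑ j ∈ Finset.range (3 ^ (r + 1)), Mnat r i j * knat r j = 0 := by
  induction r with
  | zero => intro i hi; norm_num at hi; interval_cases i <;> decide
  | succ r ih =>
    intro i hi
    have hB : (0:ℕ) < 3 ^ (r+1) := pow_pos (by norm_num) _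
    have h3 : (3:ℕ) ^ (r+2) = 3 ^ (r+1) * 3 := by ring
    rw [h3, sum_range_mul]
    by_cases hc : i < 3 ^ (r+1) - 1
    · have main : ∀ c ∈ Finset.range (3 ^ (r+1)),
          ∑ d ∈ Finset.range 3, Mnat (r+1) i (c*3+d) * knat (r+1) (c*3+d)
            = Mnat r i c * knat r c := by
        intro c hcm
        have hcB : c < 3 ^ (r+1) := Finset.mem_range.mp hcm
        have key : ∀ d < 3, Mnat (r+1) i (c*3+d) * knat (r+1) (c*3+d)
            = Mnat r i c * knat r c * knat 0 d := by
          intro d hd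
          have hdiv : (c*3+d)/3 = c := by omega
          have hmod : (c*3+d)%3 = d := by omega
          have hlt : c*3+d < 3 ^ (r+2) := by rw [h3]; omega
          rw [knat_mul r _ hlt, hdiv, hmod, Mnat_succ_def, if_pos hc, hdiv]
          ring
        rw [Finset.sum_congr rfl fun d hdm => key d (Finset.mem_range.mp hdm),
          ← Finset.mul_sum]
        have : ∑ d ∈ Finset.range 3, knat 0 d = 1 := by decide
        rw [this, mul_one]
      rw [Finset.sum_congr rfl main]
      exact ih i hc
    · have hiB : i - (3 ^ (r+1) - 1) < 2 * 3 ^ (r+1) := by omega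
      set e := (i - (3 ^ (r+1) - 1)) % 2 with he
      set c := (i - (3 ^ (r+1) - 1)) / 2 with hcdef
      have hcB : c < 3 ^ (r+1) := by omega
      have main : ∀ c' ∈ Finset.range (3 ^ (r+1)),
          ∑ d ∈ Finset.range 3, Mnat (r+1) i (c'*3+d) * knat (r+1) (c'*3+d) = 0 := by
        intro c' hcm
        have hcB' : c' < 3 ^ (r+1) := Finset.mem_range.mp hcm
        have key : ∀ d < 3, Mnat (r+1) i (c'*3+d) * knat (r+1) (c'*3+d)
            = (if c = c' then M0nat e d else 0) * (knat r c' * knat 0 d) := by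
          intro d hd
          have hdiv : (c'*3+d)/3 = c' := by omega
          have hmod : (c'*3+d)%3 = d := by omega
          have hlt : c'*3+d < 3 ^ (r+2) := by rw [h3]; omega
          rw [Mnat_succ_def, if_neg hc, knat_mul r _ hlt, hdiv, hmod, ← he, ← hcdef]
        rw [Finset.sum_congr rfl fun d hdm => key d (Finset.mem_range.mp hdm)]
        by_cases hcc : c = c'
        · simp only [if_pos hcc]
          have : ∀ d ∈ Finset.range 3, M0nat e d * (knat r c' * knat 0 d)
              = knat r c' * (M0nat e d * knat 0 d) := fun d _ => by ring
          rw [Finset.sum_congr rfl this, ← Finset.mul_sum]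
          have he2 : e = 0 ∨ e = 1 := by omega
          have : ∑ d ∈ Finset.range 3, M0nat e d * knat 0 d = 0 := by
            rcases he2 with h | h <;> rw [h] <;> decide
          rw [this, mul_zero]
        · simp [hcc]
      rw [Finset.sum_congr rfl main]
      simp

lemma count_neg (r : ℕ) :
    2 * (∑ j ∈ Finset.range (3 ^ (r + 1)), if knat r j = -1 then (1:ℕ) else 0)
      = 3 ^ (r + 1) - 1 := by
  have h : ∀ j, 2 * (if knat r j = -1 then (1:ℤ) else 0) = 1 - knat r j := by
    intro j; rcases knat_pm r j with h | h <;> simp [h]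
  have hz : (2 : ℤ) * (∑ j ∈ Finset.range (3 ^ (r + 1)), if knat r j = -1 then (1:ℤ) else 0)
      = (3 ^ (r + 1) : ℤ) - 1 := by
    rw [Finset.mul_sum, Finset.sum_congr rfl fun j _ => h j, Finset.sum_sub_distrib, knat_sum]
    simp
  have hcast : ((∑ j ∈ Finset.range (3 ^ (r + 1)), if knat r j = -1 then (1:ℕ) else 0 : ℕ) : ℤ)
      = ∑ j ∈ Finset.range (3 ^ (r + 1)), if knat r j = -1 then (1:ℤ) else 0 := by
    rw [Nat.cast_sum]
    exact Finset.sum_congr rfl fun j _ => by split <;> simp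
  have h1 : (1:ℕ) ≤ 3 ^ (r + 1) := Nat.one_le_pow _ _ (by norm_num)
  have : ((2 * (∑ j ∈ Finset.range (3 ^ (r + 1)), if knat r j = -1 then (1:ℕ) else 0) : ℕ) : ℤ)
      = ((3 ^ (r + 1) - 1 : ℕ) : ℤ) := by
    push_cast [h1]
    rw [hcast] at *
    linarith [hz]
  exact_mod_cast this


open Matrix in
/-- For every `r` and every `n ≥ (3^(r+1)-1)/2` there exist componentwise nonnegative
integer vectors `s, s' ∈ ℕ^(3^(r+1))` with `s' = s + k_r` componentwise, `∑ s = n`,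
`∑ s' = n + 1`, and `M_r · s = M_r · s'`: two configurations of different total sizes
`n` and `n+1` that produce the same leader observation. -/
theorem exists_indistinguishable_configurations (r n : ℕ)
    (hn : (3 ^ (r + 1) - 1) / 2 ≤ n) :
    ∃ s s' : Fin (3 ^ (r + 1)) → ℕ,
      (∀ j, (s' j : ℤ) = (s j : ℤ) + kvec r j) ∧
      (∑ j, s j = n) ∧ (∑ j, s' j = n + 1) ∧
      Mmat r *ᵥ (fun j => (s j : ℤ)) = Mmat r *ᵥ (fun j => (s' j : ℤ)) := by
  have hN1 : (1:ℕ) ≤ 3 ^ (r + 1) := Nat.one_le_pow _ _ (by norm_num)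
  have hNodd : 3 ^ (r + 1) % 2 = 1 := by
    rw [Nat.pow_mod]; norm_num
  set m := (3 ^ (r + 1) - 1) / 2 with hm
  have hm2 : 2 * m = 3 ^ (r + 1) - 1 := by omega
  set c := ∑ j ∈ Finset.range (3 ^ (r + 1)), if knat r j = -1 then (1:ℕ) else 0 with hcd
  have hcm : c = m := by have := count_neg r; omega
  set s : Fin (3 ^ (r + 1)) → ℕ :=
    fun j => (if knat r j.val = -1 then 1 else 0) + (if j.val = 0 then n - m else 0) with hs
  set s' : Fin (3 ^ (r + 1)) → ℕ :=
    fun j => (if knat r j.val = -1 then 0 else 1) + (if j.val = 0 then n - m else 0) with hs'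
  have hrel : ∀ j, (s' j : ℤ) = (s j : ℤ) + kvec r j := by
    intro j
    rcases knat_pm r j.val with h | h <;>
      simp [hs, hs', kvec, h] <;> push_cast <;> ring
  have hextra : ∑ j ∈ Finset.range (3 ^ (r + 1)), (if j = 0 then n - m else 0) = n - m := by
    rw [Finset.sum_ite_eq' (Finset.range (3 ^ (r + 1))) 0 (fun _ => n - m)]
    rw [if_pos (Finset.mem_range.mpr (by omega))]
  have hsum : ∑ j, s j = n := by
    rw [hs, Fin.sum_univ_eq_sum_range
      (fun j => (if knat r j = -1 then 1 else 0) + (if j = 0 then n - m else 0))]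
    rw [Finset.sum_add_distrib, hextra, ← hcd, hcm]
    omega
  have hcompl : ∑ j ∈ Finset.range (3 ^ (r + 1)), (if knat r j = -1 then 0 else 1) + c
      = 3 ^ (r + 1) := by
    rw [hcd, ← Finset.sum_add_distrib]
    rw [Finset.sum_congr rfl (fun j _ => by split <;> rfl : ∀ j ∈ Finset.range (3 ^ (r+1)),
      ((if knat r j = -1 then 0 else 1) + (if knat r j = -1 then (1:ℕ) else 0)) = 1)]
    simp
  have hsum' : ∑ j, s' j = n + 1 := by
    rw [hs', Fin.sum_univ_eq_sum_range
      (fun j => (if knat r j = -1 then 0 else 1) + (if j = 0 then n - m else 0))]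
    rw [Finset.sum_add_distrib, hextra]
    omega
  refine ⟨s, s', hrel, hsum, hsum', ?_⟩
  funext i
  have key : ∑ j : Fin (3 ^ (r + 1)), Mnat r i.val j.val * knat r j.val = 0 := by
    rw [Fin.sum_univ_eq_sum_range (fun j => Mnat r i.val j * knat r j)]
    exact Mk_sum r i.val i.isLt
  simp only [Matrix.mulVec, dotProduct, Mmat, Matrix.of_apply]
  have hR : ∑ j : Fin (3 ^ (r + 1)), Mnat r i.val j.val * ((s' j : ℤ))
      = (∑ j : Fin (3 ^ (r + 1)), Mnat r i.val j.val * ((s j : ℤ)))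
        + ∑ j : Fin (3 ^ (r + 1)), Mnat r i.val j.val * knat r j.val := by
    rw [← Finset.sum_add_distrib]
    refine Finset.sum_congr rfl fun j _ => ?_
    rw [hrel j]
    simp only [kvec]
    ring
  rw [hR, key, add_zero]
end

section
/- For every natural number r, if s ∈ ℕ^{3^{r+1}} is a componentwise nonnegative integer vector whose component sum satisfies ∑s < (3^{r+1}−1)/2, then s is the unique componentwise nonnegative integer solution x of the equation M_r · x = M_r · s; in particular any two nonnegative integer solutions with the same image under M_r and sum below (3^{r+1}−1)/2 are equal. -/
open Finset Matrix

theorem sum_range_mul_eq_sum_sum {M : Type*} [AddCommMonoid M] (m N : ℕ) (f : ℕ → M) :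
    ∑ j ∈ range (m * N), f j = ∑ b ∈ range N, ∑ t ∈ range m, f (m * b + t) := by
  induction N with
  | zero => simp
  | succ N ih => rw [mul_add_one, sum_range_add, ih, sum_range_succ]

theorem mul_add_mod_mul_of_lt {m b t N : ℕ} (ht : t < m) :
    (m * b + t) % (m * N) = m * (b % N) + t := by
  rcases Nat.eq_zero_or_pos N with rfl | hN
  · simp
  have hlt : m * (b % N) + t < m * N := by
    have := Nat.mod_lt b hN
    nlinarith
  conv_lhs => rw [← Nat.mod_add_div b N]
  rw [show m * (b % N + N * (b / N)) + t = m * (b % N) + t + m * N * (b / N) by ring,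
    Nat.add_mul_mod_self_left, Nat.mod_eq_of_lt hlt]

theorem knat_eq_one_or_eq_neg_one (r j : ℕ) : knat r j = 1 ∨ knat r j = -1 := by
  induction r generalizing j with
  | zero => unfold knat; split <;> simp
  | succ r ih => unfold knat; rcases ih (j % 3 ^ (r + 1)) with h | h <;> split <;> simp [h]

theorem knat_succ_three_mul_add (r : ℕ) {b t : ℕ} (hb : b < 3 ^ (r + 1)) (ht : t < 3) :
    knat (r + 1) (3 * b + t) = knat 0 t * knat r b := by
  induction r generalizing b with
  | zero => interval_cases b <;> interval_cases t <;> rfl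
  | succ r ih =>
    have hmod : (3 * b + t) % 3 ^ (r + 1 + 1) = 3 * (b % 3 ^ (r + 1)) + t := by
      rw [pow_succ' 3 (r + 1)]; exact mul_add_mod_mul_of_lt ht
    have hlt : 3 * b + t < 2 * 3 ^ (r + 1 + 1) ↔ b < 2 * 3 ^ (r + 1) := by
      rw [pow_succ' 3 (r + 1)]; omega
    rw [knat.eq_2, knat.eq_2 b r, hmod, ih (Nat.mod_lt _ (by positivity))]
    by_cases h : b < 2 * 3 ^ (r + 1) <;> simp [h, hlt]

theorem sum_knat (r : ℕ) : ∑ j ∈ range (3 ^ (r + 1)), knat r j = 1 := by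
  induction r with
  | zero => decide
  | succ r ih =>
    rw [pow_succ' 3 (r + 1), sum_range_mul_eq_sum_sum]
    calc _ = ∑ b ∈ range (3 ^ (r + 1)), knat r b * ∑ t ∈ range 3, knat 0 t :=
          sum_congr rfl fun b hb => by
            rw [mul_sum]
            exact sum_congr rfl fun t ht => by
              rw [knat_succ_three_mul_add r (mem_range.1 hb) (mem_range.1 ht), mul_comm]
      _ = 1 := by rw [← sum_mul, ih, one_mul]; decide

theorem Mnat_succ_three_mul_add_of_lt {r i : ℕ} (hi : i < 3 ^ (r + 1) - 1) (b : ℕ) {t : ℕ}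
    (ht : t < 3) : Mnat (r + 1) i (3 * b + t) = Mnat r i b := by
  rw [Mnat, if_pos hi]
  congr 1
  omega

theorem Mnat_succ_three_mul_add_of_ge {r b p : ℕ} (hp : p < 2) (b' : ℕ) {t : ℕ} (ht : t < 3) :
    Mnat (r + 1) (3 ^ (r + 1) - 1 + (2 * b + p)) (3 * b' + t) =
      if b = b' then M0nat p t else 0 := by
  have hrow : 3 ^ (r + 1) - 1 + (2 * b + p) - (3 ^ (r + 1) - 1) = 2 * b + p := by omega
  have hdiv : (2 * b + p) / 2 = b := by omega
  have hmod : (2 * b + p) % 2 = p := by omega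
  have hdiv' : (3 * b' + t) / 3 = b' := by omega
  have hmod' : (3 * b' + t) % 3 = t := by omega
  rw [Mnat, if_neg (by omega), hrow, hdiv, hmod, hdiv', hmod']

theorem sum_Mnat_succ_mul_of_lt {r i : ℕ} (hi : i < 3 ^ (r + 1) - 1) (v : ℕ → ℤ) :
    ∑ j ∈ range (3 ^ (r + 1 + 1)), Mnat (r + 1) i j * v j =
      ∑ b ∈ range (3 ^ (r + 1)), Mnat r i b * ∑ t ∈ range 3, v (3 * b + t) := by
  rw [pow_succ' 3 (r + 1), sum_range_mul_eq_sum_sum]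
  refine sum_congr rfl fun b _ => ?_
  rw [mul_sum]
  exact sum_congr rfl fun t ht => by rw [Mnat_succ_three_mul_add_of_lt hi b (mem_range.1 ht)]

theorem sum_Mnat_succ_mul_of_ge {r b p : ℕ} (hb : b < 3 ^ (r + 1)) (hp : p < 2)
    (v : ℕ → ℤ) :
    ∑ j ∈ range (3 ^ (r + 1 + 1)), Mnat (r + 1) (3 ^ (r + 1) - 1 + (2 * b + p)) j * v j =
      ∑ t ∈ range 3, M0nat p t * v (3 * b + t) := by
  rw [pow_succ' 3 (r + 1), sum_range_mul_eq_sum_sum]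
  calc _ = ∑ b' ∈ range (3 ^ (r + 1)),
        if b = b' then ∑ t ∈ range 3, M0nat p t * v (3 * b' + t) else 0 :=
        sum_congr rfl fun b' _ => by
          split_ifs with h
          · subst h
            exact sum_congr rfl fun t ht => by
              rw [Mnat_succ_three_mul_add_of_ge hp b (mem_range.1 ht), if_pos rfl]
          · exact sum_eq_zero fun t ht => by
              rw [Mnat_succ_three_mul_add_of_ge hp b' (mem_range.1 ht), if_neg h, zero_mul]
    _ = _ := by rw [sum_ite_eq, if_pos (mem_range.2 hb)]

theorem eq_knat_zero_mul_of_sum_M0nat_mul_eq_zero {w : ℕ → ℤ}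
    (hw : ∀ p < 2, ∑ t ∈ range 3, M0nat p t * w t = 0) {t : ℕ} (ht : t < 3) :
    w t = knat 0 t * w 0 := by
  have h0 := hw 0 (by norm_num)
  have h1 := hw 1 (by norm_num)
  simp only [sum_range_succ, sum_range_zero, M0nat] at h0 h1
  interval_cases t <;> simp only [knat] <;> norm_num <;> linarith

theorem exists_eq_mul_knat_of_sum_Mnat_mul_eq_zero (r : ℕ) {v : ℕ → ℤ}
    (hv : ∀ i < 3 ^ (r + 1) - 1, ∑ j ∈ range (3 ^ (r + 1)), Mnat r i j * v j = 0) :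
    ∃ c : ℤ, ∀ j < 3 ^ (r + 1), v j = c * knat r j := by
  induction r generalizing v with
  | zero =>
    exact ⟨v 0, fun j hj => by
      rw [eq_knat_zero_mul_of_sum_M0nat_mul_eq_zero (fun p hp => hv p (by omega)) hj, mul_comm]⟩
  | succ r ih =>
    have hblock : ∀ b < 3 ^ (r + 1), ∀ t < 3, v (3 * b + t) = knat 0 t * v (3 * b) :=
      fun b hb t ht => eq_knat_zero_mul_of_sum_M0nat_mul_eq_zero (w := fun t => v (3 * b + t))
        (fun p hp => by
          rw [← sum_Mnat_succ_mul_of_ge hb hp]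
          exact hv _ (by rw [pow_succ 3 (r + 1)]; omega)) ht
    have hcoarse :
        ∀ i < 3 ^ (r + 1) - 1, ∑ b ∈ range (3 ^ (r + 1)), Mnat r i b * v (3 * b) = 0 := by
      intro i hi
      rw [← hv i (by rw [pow_succ 3 (r + 1)]; omega), sum_Mnat_succ_mul_of_lt hi]
      refine sum_congr rfl fun b hb => ?_
      rw [sum_congr rfl fun t ht => hblock b (mem_range.1 hb) t (mem_range.1 ht), ← sum_mul,
        show ∑ t ∈ range 3, knat 0 t = 1 by decide, one_mul]
    obtain ⟨c, hc⟩ := ih hcoarse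
    refine ⟨c, fun j hj => ?_⟩
    obtain ⟨b, t, ht, rfl⟩ : ∃ b t, t < 3 ∧ j = 3 * b + t :=
      ⟨j / 3, j % 3, Nat.mod_lt _ (by norm_num), (Nat.div_add_mod j 3).symm⟩
    have hb : b < 3 ^ (r + 1) := by rw [pow_succ 3 (r + 1)] at hj; omega
    rw [hblock b hb t ht, hc b hb, knat_succ_three_mul_add r hb ht]
    ring

theorem kvec_eq_one_or_eq_neg_one (r : ℕ) (j : Fin (3 ^ (r + 1))) :
    kvec r j = 1 ∨ kvec r j = -1 :=
  knat_eq_one_or_eq_neg_one r j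

theorem sum_kvec (r : ℕ) : ∑ j, kvec r j = 1 :=
  (Fin.sum_univ_eq_sum_range (knat r) _).trans (sum_knat r)

theorem exists_eq_smul_kvec_of_mulVec_eq_zero {r : ℕ} {w : Fin (3 ^ (r + 1)) → ℤ}
    (hw : Mmat r *ᵥ w = 0) : ∃ c : ℤ, w = c • kvec r := by
  set v : ℕ → ℤ := fun j => if h : j < 3 ^ (r + 1) then w ⟨j, h⟩ else 0 with hv
  obtain ⟨c, hc⟩ := exists_eq_mul_knat_of_sum_Mnat_mul_eq_zero r (v := v) fun i hi => by
    rw [← Fin.sum_univ_eq_sum_range (fun j => Mnat r i j * v j)]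
    simpa [hv, mulVec, dotProduct, Mmat] using congrFun hw ⟨i, hi⟩
  exact ⟨c, funext fun j => by simpa [hv, kvec] using hc j j.isLt⟩

theorem eq_zero_of_forall_nonneg_add_mul {ι : Type*} [Fintype ι] {k : ι → ℤ}
    (hk : ∀ i, k i = 1 ∨ k i = -1) (hk_sum : ∑ i, k i = 1) {s : ι → ℕ}
    (hs : 2 * ∑ i, s i + 1 < Fintype.card ι) {c : ℤ} (hc : ∀ i, 0 ≤ (s i : ℤ) + c * k i) :
    c = 0 := by
  by_contra hc0
  obtain ⟨σ, hσ, hpoint⟩ : ∃ σ : ℤ, σ ≤ 1 ∧ ∀ i, 1 - σ * k i ≤ 2 * (s i : ℤ) := by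
    rcases lt_or_gt_of_ne hc0 with hneg | hpos
    · refine ⟨-1, by norm_num, fun i => ?_⟩
      have := hc i
      rcases hk i with h | h <;> rw [h] at this ⊢ <;> omega
    · refine ⟨1, le_rfl, fun i => ?_⟩
      have := hc i
      rcases hk i with h | h <;> rw [h] at this ⊢ <;> omega
  have hsum := sum_le_sum fun i (_ : i ∈ univ) => hpoint i
  rw [sum_sub_distrib, ← mul_sum, hk_sum, ← mul_sum, sum_const, card_univ, nsmul_one,
    ← Nat.cast_sum] at hsum
  omega

open Matrix in
/-- If `s ∈ ℕ^(3^(r+1))` is a componentwise nonnegative integer vector with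
`∑ s < (3^(r+1)-1)/2`, then `s` is the unique componentwise nonnegative integer solution
`x` of `M_r · x = M_r · s`: any nonnegative integer vector with the same image under
`M_r` equals `s`. -/
theorem unique_solution_of_small_sum (r : ℕ) (s : Fin (3 ^ (r + 1)) → ℕ)
    (hs : ∑ j, s j < (3 ^ (r + 1) - 1) / 2)
    (x : Fin (3 ^ (r + 1)) → ℕ)
    (hx : Mmat r *ᵥ (fun j => (x j : ℤ)) = Mmat r *ᵥ (fun j => (s j : ℤ))) :
    x = s := by
  obtain ⟨c, hc⟩ := exists_eq_smul_kvec_of_mulVec_eq_zero (w := fun j => (x j : ℤ) - s j)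
    (by rw [← sub_eq_zero.2 hx, ← Matrix.mulVec_sub]; rfl)
  have hxc : ∀ j, (x j : ℤ) = s j + c * kvec r j := fun j => by
    have := congrFun hc j
    simp only [Pi.smul_apply, smul_eq_mul] at this
    omega
  have hc0 : c = 0 := eq_zero_of_forall_nonneg_add_mul (kvec_eq_one_or_eq_neg_one r) (sum_kvec r)
    (by rw [Fintype.card_fin]; omega) fun j => hxc j ▸ (x j).cast_nonneg
  funext j
  simpa [hc0] using hxc j
end
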